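/- arXiv:0907.3188 — 3 statements merged into one kernel-verified Lean document; each statement's English description precedes it below -/
import Mathlib

section
/- If t is a positive integer not divisible by 3, then a₃(t) = 0; that is, there is no 3×3 magic square with magic sum t. -/
/-- A 3×3 magic square with magic sum `t`: pairwise distinct positive integer entries,
all row sums, column sums, and both main diagonal sums equal to `t`. -/
def IsMagicSquare3 (t : ℕ) (M : Matrix (Fin 3) (Fin 3) ℕ) : Prop :=
  (∀ i j, 0 < M i j) ∧
  (Function.Injective fun p : Fin 3 × Fin 3 => M p.1 p.2) ∧
  (∀ i, ∑ j, M i j = t) ∧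
  (∀ j, ∑ i, M i j = t) ∧
  M 0 0 + M 1 1 + M 2 2 = t ∧
  M 0 2 + M 1 1 + M 2 0 = t

/-- The number of 3×3 magic squares with magic sum `t`. -/
noncomputable def a3 (t : ℕ) : ℕ := Set.ncard {M : Matrix (Fin 3) (Fin 3) ℕ | IsMagicSquare3 t M}

/-- The middle row, the middle column and the two diagonals cover the centre four times and every
other cell once, so their total `4 • t` is the sum of all entries, `3 • t`, plus `3 • M 1 1`. -/
theorem Matrix.three_nsmul_center_eq {R : Type*} [AddCancelCommMonoid R]
    (M : Matrix (Fin 3) (Fin 3) R) (t : R) (hrow : ∀ i, ∑ j, M i j = t) (hcol : ∑ i, M i 1 = t)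
    (hdiag : M 0 0 + M 1 1 + M 2 2 = t) (hanti : M 0 2 + M 1 1 + M 2 0 = t) :
    3 • M 1 1 = t := by
  have cover : 3 • M 1 1 + (∑ j, M 0 j + ∑ j, M 1 j + ∑ j, M 2 j) =
      ∑ j, M 1 j + (∑ i, M i 1 + (M 0 0 + M 1 1 + M 2 2) + (M 0 2 + M 1 1 + M 2 0)) := by
    simp only [Fin.sum_univ_three]
    abel
  rw [hrow, hrow, hrow, hcol, hdiag, hanti] at cover
  exact add_right_cancel cover

theorem IsMagicSquare3.three_mul_center {t : ℕ} {M : Matrix (Fin 3) (Fin 3) ℕ}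
    (hM : IsMagicSquare3 t M) : 3 * M 1 1 = t :=
  let ⟨_, _, hrow, hcol, hdiag, hanti⟩ := hM
  M.three_nsmul_center_eq t hrow (hcol 1) hdiag hanti

theorem a3_eq_zero_of_not_three_dvd_general (t : ℕ) (h : ¬ (3 ∣ t)) :
    a3 t = 0 := by
  have hempty : {M : Matrix (Fin 3) (Fin 3) ℕ | IsMagicSquare3 t M} = ∅ :=
    Set.eq_empty_of_forall_notMem fun _ hM => h ⟨_, hM.three_mul_center.symm⟩
  rw [a3, hempty, Set.ncard_empty]

theorem a3_eq_zero_of_not_three_dvd (t : ℕ) (ht : 0 < t) (h : ¬ (3 ∣ t)) :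
    a3 t = 0 :=
  a3_eq_zero_of_not_three_dvd_general t h
end

section
/- If t is a positive integer with t ≡ 3 (mod 18), then a₃(t) = (2t² − 32t + 78)/9. -/
/-
Every magic square with magic sum `t` has centre `c = t / 3` and is Lucas's square
`c + !![a, -a-b, b; -a+b, 0, a-b; -b, a+b, -a]`, where `a`, `b` are the offsets of the two top
corners. Its entries are positive iff `|a ± b| < c` and pairwise distinct iff `(a, b)` avoids the
eight lines `a = 0`, `b = 0`, `a = ±b`, `a = ±2b`, `b = ±2a`. The eight symmetries of the square
act freely on these parameters, and a fundamental domain is `0 < b < a`, `a + b < c`, `a ≠ 2b`.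
For `c = 6k + 1` it has `9k² - 5k` points, so `a₃(18k + 3) = 8 (9k² - 5k)`.
-/

open Finset

theorem Finset.card_eq_two_mul_card_filter_of_involutive {α : Type*} {s : Finset α}
    {p : α → Prop} [DecidablePred p] {f : α → α} (hf : Function.Involutive f)
    (hs : ∀ x ∈ s, f x ∈ s) (hp : ∀ x ∈ s, p (f x) ↔ ¬ p x) :
    #s = 2 * #(s.filter p) := by
  rw [← card_filter_add_card_filter_not p, two_mul]
  congr 1
  refine card_nbij' f f (fun x hx => ?_) (fun x hx => ?_) (fun x _ => hf x) (fun x _ => hf x)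
  · simp only [coe_filter, Set.mem_ofPred_eq] at hx ⊢
    exact ⟨hs x hx.1, (hp x hx.1).2 hx.2⟩
  · simp only [coe_filter, Set.mem_ofPred_eq] at hx ⊢
    exact ⟨hs x hx.1, fun h => (hp x hx.1).1 h hx.2⟩

def lucasSquare {R : Type*} [Add R] [Sub R] (c a b : R) : Matrix (Fin 3) (Fin 3) R :=
  !![c + a, c - a - b, c + b;
     c - a + b, c, c + a - b;
     c - b, c + a + b, c - a]

section CommRing

variable {R : Type*} [CommRing R]

theorem lucasSquare_row_sum (c a b : R) (i : Fin 3) : ∑ j, lucasSquare c a b i j = 3 * c := by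
  fin_cases i <;> simp [lucasSquare, Fin.sum_univ_three] <;> ring

theorem lucasSquare_col_sum (c a b : R) (j : Fin 3) : ∑ i, lucasSquare c a b i j = 3 * c := by
  fin_cases j <;> simp [lucasSquare, Fin.sum_univ_three] <;> ring

theorem lucasSquare_diag_sum (c a b : R) :
    lucasSquare c a b 0 0 + lucasSquare c a b 1 1 + lucasSquare c a b 2 2 = 3 * c := by
  simp [lucasSquare]; ring

theorem lucasSquare_antidiag_sum (c a b : R) :
    lucasSquare c a b 0 2 + lucasSquare c a b 1 1 + lucasSquare c a b 2 0 = 3 * c := by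
  simp [lucasSquare]; ring

theorem eq_lucasSquare_of_lineSums (M : Matrix (Fin 3) (Fin 3) R) (t : R)
    (hrow : ∀ i, ∑ j, M i j = t) (hcol : ∀ j, ∑ i, M i j = t)
    (hdiag : M 0 0 + M 1 1 + M 2 2 = t) (hanti : M 0 2 + M 1 1 + M 2 0 = t) :
    t = 3 * M 1 1 ∧ M = lucasSquare (M 1 1) (M 0 0 - M 1 1) (M 0 2 - M 1 1) := by
  simp only [Fin.sum_univ_three] at hrow hcol
  have r0 := hrow 0; have r1 := hrow 1; have r2 := hrow 2
  have k0 := hcol 0; have k1 := hcol 1; have k2 := hcol 2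
  -- the middle row, middle column and both diagonals cover every cell once
  -- and the centre three more times
  have ht : t = 3 * M 1 1 := by linear_combination r0 + r2 - k1 - hdiag - hanti
  refine ⟨ht, ?_⟩
  ext i j
  fin_cases i <;> fin_cases j <;> simp [lucasSquare] <;> grind

end CommRing

theorem lucasSquare_pos_iff (c a b : ℤ) :
    (∀ i j, 0 < lucasSquare c a b i j) ↔
      -c < a + b ∧ a + b < c ∧ -c < a - b ∧ a - b < c := by
  constructor
  · intro h
    have h01 := h 0 1; have h10 := h 1 0; have h12 := h 1 2; have h21 := h 2 1
    simp [lucasSquare] at h01 h10 h12 h21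
    omega
  · intro h i j
    fin_cases i <;> fin_cases j <;> simp [lucasSquare] <;> omega

theorem lucasSquare_injective_iff (c a b : ℤ) :
    Function.Injective (fun p : Fin 3 × Fin 3 => lucasSquare c a b p.1 p.2) ↔
      a ≠ 0 ∧ b ≠ 0 ∧ a ≠ b ∧ a ≠ -b ∧
        a ≠ 2 * b ∧ a ≠ -(2 * b) ∧ b ≠ 2 * a ∧ b ≠ -(2 * a) := by
  constructor
  · intro h
    have hne (p q : Fin 3 × Fin 3) (hpq : p ≠ q) := h.ne hpq
    have ha := hne (0, 0) (1, 1) (by decide); have hb := hne (0, 2) (1, 1) (by decide)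
    have hab := hne (0, 0) (0, 2) (by decide); have hab' := hne (0, 0) (2, 0) (by decide)
    have ha2b := hne (0, 2) (1, 2) (by decide); have ha2b' := hne (0, 1) (0, 2) (by decide)
    have hb2a := hne (0, 0) (1, 0) (by decide); have hb2a' := hne (2, 1) (2, 2) (by decide)
    simp [lucasSquare] at ha hb hab hab' ha2b ha2b' hb2a hb2a'
    omega
  · rintro h ⟨i, j⟩ ⟨i', j'⟩ he
    fin_cases i <;> fin_cases j <;> fin_cases i' <;> fin_cases j' <;>
      simp [lucasSquare] at he ⊢ <;> omega

noncomputable def lucasParams (c : ℤ) : Finset (ℤ × ℤ) :=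
  (Ioo (-c) c ×ˢ Ioo (-c) c).filter fun p =>
    (-c < p.1 + p.2 ∧ p.1 + p.2 < c ∧ -c < p.1 - p.2 ∧ p.1 - p.2 < c) ∧
    (p.1 ≠ 0 ∧ p.2 ≠ 0 ∧ p.1 ≠ p.2 ∧ p.1 ≠ -p.2 ∧
      p.1 ≠ 2 * p.2 ∧ p.1 ≠ -(2 * p.2) ∧ p.2 ≠ 2 * p.1 ∧ p.2 ≠ -(2 * p.1))

theorem mem_lucasParams {c : ℤ} {p : ℤ × ℤ} :
    p ∈ lucasParams c ↔ (∀ i j, 0 < lucasSquare c p.1 p.2 i j) ∧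
      Function.Injective (fun q : Fin 3 × Fin 3 => lucasSquare c p.1 p.2 q.1 q.2) := by
  rw [lucasSquare_pos_iff, lucasSquare_injective_iff, lucasParams, mem_filter, mem_product,
    mem_Ioo, mem_Ioo]
  constructor
  · exact fun h => h.2
  · intro h
    exact ⟨by omega, h⟩

theorem isMagicSquare3_iff (c : ℕ) (M : Matrix (Fin 3) (Fin 3) ℕ) :
    IsMagicSquare3 (3 * c) M ↔
      ∃ p ∈ lucasParams c, M.map (↑) = lucasSquare (c : ℤ) p.1 p.2 := by
  set N : Matrix (Fin 3) (Fin 3) ℤ := M.map (↑)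
  have hpos : (∀ i j, 0 < M i j) ↔ ∀ i j, 0 < N i j := by simp [N]
  have hinj : Function.Injective (fun q : Fin 3 × Fin 3 => M q.1 q.2) ↔
      Function.Injective (fun q : Fin 3 × Fin 3 => N q.1 q.2) :=
    (Nat.cast_injective.of_comp_iff _).symm
  have hcast {x : ℕ} {y : ℤ} (h : (x : ℤ) = y) (hy : y = 3 * c) : x = 3 * c := by omega
  constructor
  · rintro ⟨hMpos, hMinj, hrow, hcol, hdiag, hanti⟩
    obtain ⟨hc, hN⟩ := eq_lucasSquare_of_lineSums N (3 * c)
      (fun i => by simp [N]; exact_mod_cast hrow i) (fun j => by simp [N]; exact_mod_cast hcol j)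
      (by simp [N]; exact_mod_cast hdiag) (by simp [N]; exact_mod_cast hanti)
    rw [show N 1 1 = c by omega] at hN
    refine ⟨(N 0 0 - c, N 0 2 - c), ?_, hN⟩
    rw [mem_lucasParams, ← hN]
    exact ⟨hpos.1 hMpos, hinj.1 hMinj⟩
  · rintro ⟨p, hp, hN⟩
    rw [mem_lucasParams, ← hN] at hp
    refine ⟨hpos.2 hp.1, hinj.2 hp.2, fun i => ?_, fun j => ?_, ?_, ?_⟩
    · exact hcast (by simp [N]) (hN ▸ lucasSquare_row_sum _ _ _ i)
    · exact hcast (by simp [N]) (hN ▸ lucasSquare_col_sum _ _ _ j)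
    · exact hcast (by simp [N]) (hN ▸ lucasSquare_diag_sum _ _ _)
    · exact hcast (by simp [N]) (hN ▸ lucasSquare_antidiag_sum _ _ _)

theorem offsets_eq_of_eq_lucasSquare {N : Matrix (Fin 3) (Fin 3) ℤ} {c : ℤ} {p : ℤ × ℤ}
    (h : N = lucasSquare c p.1 p.2) : (N 0 0 - c, N 0 2 - c) = p := by
  subst h; simp [lucasSquare]

theorem a3_three_mul (c : ℕ) : a3 (3 * c) = (lucasParams c).card := by
  rw [a3, ← Set.ncard_coe_finset]
  refine Set.ncard_congr (fun M _ => ((M 0 0 : ℤ) - c, (M 0 2 : ℤ) - c)) ?_ ?_ ?_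
  · intro M hM
    obtain ⟨p, hp, hN⟩ := (isMagicSquare3_iff c M).1 hM
    rwa [← offsets_eq_of_eq_lucasSquare hN] at hp
  · intro M M' hM hM' he
    obtain ⟨p, -, hN⟩ := (isMagicSquare3_iff c M).1 hM
    obtain ⟨p', -, hN'⟩ := (isMagicSquare3_iff c M').1 hM'
    have hpp' : p = p' :=
      (offsets_eq_of_eq_lucasSquare hN).symm.trans (he.trans (offsets_eq_of_eq_lucasSquare hN'))
    rw [hpp'] at hN
    exact Matrix.map_injective Nat.cast_injective (hN.trans hN'.symm)
  · intro p hp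
    have hpos := (mem_lucasParams.1 hp).1
    have hN : ((lucasSquare (c : ℤ) p.1 p.2).map Int.toNat).map ((↑) : ℕ → ℤ) =
        lucasSquare (c : ℤ) p.1 p.2 := by
      ext i j
      simp [(hpos i j).le]
    exact ⟨_, (isMagicSquare3_iff c _).2 ⟨p, hp, hN⟩, offsets_eq_of_eq_lucasSquare hN⟩

noncomputable def lucasFundamental (c : ℤ) : Finset (ℤ × ℤ) :=
  (Ioo 0 c ×ˢ Ioo 0 c).filter fun p => p.2 < p.1 ∧ p.1 + p.2 < c ∧ p.1 ≠ 2 * p.2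

theorem card_lucasParams (c : ℤ) : #(lucasParams c) = 8 * #(lucasFundamental c) := by
  have hnegFst : #(lucasParams c) = 2 * #((lucasParams c).filter fun p => 0 < p.1) := by
    refine card_eq_two_mul_card_filter_of_involutive (f := fun p => (-p.1, p.2))
      (fun p => by simp) ?_ ?_ <;> intro p hp <;> simp [lucasParams] at hp ⊢ <;> omega
  have hnegSnd : #((lucasParams c).filter fun p => 0 < p.1) =
      2 * #(((lucasParams c).filter fun p => 0 < p.1).filter fun p => 0 < p.2) := by
    refine card_eq_two_mul_card_filter_of_involutive (f := fun p => (p.1, -p.2))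
      (fun p => by simp) ?_ ?_ <;> intro p hp <;> simp [lucasParams] at hp ⊢ <;> omega
  have hswap : #(((lucasParams c).filter fun p => 0 < p.1).filter fun p => 0 < p.2) =
      2 * #((((lucasParams c).filter fun p => 0 < p.1).filter fun p => 0 < p.2).filter
        fun p => p.2 < p.1) := by
    refine card_eq_two_mul_card_filter_of_involutive (f := Prod.swap)
      (fun p => by simp) ?_ ?_ <;> intro p hp <;> simp [lucasParams] at hp ⊢ <;> omega
  have hfund : (((lucasParams c).filter fun p => 0 < p.1).filter fun p => 0 < p.2).filter
      (fun p => p.2 < p.1) = lucasFundamental c := by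
    ext p; simp [lucasParams, lucasFundamental]; omega
  rw [hnegFst, hnegSnd, hswap, hfund]; ring

theorem sum_Icc_one_sub_two_mul (c : ℤ) (m : ℕ) :
    ∑ b ∈ Icc (1 : ℤ) m, (c - 2 * b) = m * c - m * (m + 1) := by
  induction m with
  | zero => simp
  | succ m ih =>
    rw [Nat.cast_succ, ← insert_Icc_right_eq_Icc_add_one (by omega), sum_insert (by simp), ih]
    ring

theorem card_lucasFundamental (k : ℕ) :
    (#(lucasFundamental (6 * k + 1)) : ℤ) = 9 * k ^ 2 - 5 * k := by
  have hfiber (b : ℤ) (hb : b ∈ Ioo 0 (6 * (k : ℤ) + 1)) :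
      ∑ a ∈ Ioo 0 (6 * (k : ℤ) + 1),
        (if b < a ∧ a + b < 6 * k + 1 ∧ a ≠ 2 * b then 1 else 0 : ℤ) =
      (if b ≤ 3 * k then 6 * k - 2 * b else 0) - if b ≤ 2 * k then 1 else 0 := by
    have hfilter : (Ioo 0 (6 * (k : ℤ) + 1)).filter
        (fun a => b < a ∧ a + b < 6 * k + 1 ∧ a ≠ 2 * b) =
          (Ioo b (6 * k + 1 - b)).erase (2 * b) := by
      ext a; simp only [mem_filter, mem_Ioo, mem_erase] at hb ⊢; omega
    rw [sum_boole, hfilter, card_erase_eq_ite, Int.card_Ioo]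
    simp only [mem_Ioo] at hb ⊢
    split_ifs <;> omega
  rw [lucasFundamental, card_filter, sum_product_right]
  push_cast
  rw [sum_congr rfl hfiber, sum_sub_distrib, ← sum_filter, sum_boole]
  have hlow : (Ioo (0 : ℤ) (6 * k + 1)).filter (fun b => b ≤ 3 * (k : ℤ)) =
      Icc 1 ((3 * k : ℕ) : ℤ) := by
    ext b; simp only [mem_filter, mem_Ioo, mem_Icc]; push_cast; omega
  have hmid : (Ioo (0 : ℤ) (6 * k + 1)).filter (fun b => b ≤ 2 * (k : ℤ)) =
      Icc 1 (2 * (k : ℤ)) := by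
    ext b; simp only [mem_filter, mem_Ioo, mem_Icc]; omega
  rw [hlow, hmid, sum_Icc_one_sub_two_mul, Int.card_Icc]
  push_cast
  rw [show (2 * (k : ℤ) + 1 - 1).toNat = 2 * k by omega]
  push_cast
  ring

theorem a3_formula_mod18_3_general (t : ℕ) (h : t % 18 = 3) :
    (a3 t : ℚ) = (2 * (t : ℚ) ^ 2 - 32 * (t : ℚ) + 78) / 9 := by
  obtain ⟨k, rfl⟩ : ∃ k, t = 3 * (6 * k + 1) := ⟨t / 18, by omega⟩
  have hcount : (a3 (3 * (6 * k + 1)) : ℤ) = 8 * (9 * k ^ 2 - 5 * k) := by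
    rw [a3_three_mul, card_lucasParams]
    push_cast
    rw [card_lucasFundamental]
  rw [show (a3 (3 * (6 * k + 1)) : ℚ) = ((a3 (3 * (6 * k + 1)) : ℤ) : ℚ) by norm_cast, hcount]
  push_cast
  ring

theorem a3_formula_mod18_3 (t : ℕ) (ht : 0 < t) (h : t % 18 = 3) :
    (a3 t : ℚ) = (2 * (t : ℚ) ^ 2 - 32 * (t : ℚ) + 78) / 9 :=
  a3_formula_mod18_3_general t h
end

section
/- If t is a positive integer with t ≡ 9 (mod 18), then a₃(t) = (2t² − 32t + 126)/9. -/
/-!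
The center of a 3×3 magic square with magic sum `t` is `c = t / 3`, and writing `a, b` for the
deviations of the two top corners from `c`, the square is
```
c + a      c - a - b   c + b
c - a + b  c           c + a - b
c - b      c + a + b   c - a
```
Its entries are positive iff `|a| + |b| < c`, and pairwise distinct iff `(a, b)` avoids the eight
lines through the origin in the directions `(1, 0), (0, 1), (1, ±1), (2, ±1), (1, ±2)`. Hence
`a₃(3c)` counts the lattice points `≠ 0` of the diamond `|a| + |b| ≤ N = c - 1` off these lines.
The diamond has `2N² + 2N + 1` points, and the line in a primitive direction `d` meets it in
`2⌊N / ‖d‖₁⌋ + 1` points, so `a₃(3(N + 1)) = 2N² - 2N - 4⌊N/2⌋ - 8⌊N/3⌋`, which for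
`N = 6m + 2` is `72m² + 8m`.
-/

open Finset

noncomputable def diamond (N : ℕ) : Finset (ℤ × ℤ) :=
  (Icc (-(N : ℤ)) N ×ˢ Icc (-(N : ℤ)) N).filter fun p => p.1.natAbs + p.2.natAbs ≤ N

lemma card_diamond_fiber (N : ℕ) (a : ℤ) (ha : a.natAbs ≤ N) :
    ((diamond N).filter fun p => p.1 = a).card = 2 * (N - a.natAbs) + 1 := by
  have : (diamond N).filter (fun p => p.1 = a) =
      (Icc (-((N - a.natAbs : ℕ) : ℤ)) (N - a.natAbs : ℕ)).map (.sectR a ℤ) := by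
    ext ⟨x, y⟩
    simp only [diamond, mem_filter, mem_product, mem_Icc, mem_map,
      Function.Embedding.sectR_apply, Prod.mk.injEq]
    constructor
    · rintro ⟨⟨-, h⟩, rfl⟩; exact ⟨y, by omega, rfl, rfl⟩
    · rintro ⟨y, hy, rfl, rfl⟩; omega
  rw [this, card_map, Int.card_Icc]
  omega

lemma sum_Icc_two_mul_sub_natAbs_add_one (N : ℕ) :
    ∑ a ∈ Icc (-(N : ℤ)) N, (2 * (N - a.natAbs) + 1) = 2 * N ^ 2 + 2 * N + 1 := by
  induction N with
  | zero => simp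
  | succ N ih =>
    have hIcc : Icc (-((N + 1 : ℕ) : ℤ)) (N + 1 : ℕ) =
        insert (-((N + 1 : ℕ) : ℤ)) (insert ((N + 1 : ℕ) : ℤ) (Icc (-(N : ℤ)) N)) := by
      ext x; simp only [mem_insert, mem_Icc]; omega
    rw [hIcc, sum_insert (by rw [mem_insert, mem_Icc]; omega), sum_insert (by rw [mem_Icc]; omega),
      sum_congr rfl (g := fun a => (2 * (N - a.natAbs) + 1) + 2)
        (fun a ha => by rw [mem_Icc] at ha; omega),
      sum_add_distrib, ih, sum_const, Int.card_Icc, smul_eq_mul]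
    have : ((N : ℤ) + 1 - -(N : ℤ)).toNat = 2 * N + 1 := by omega
    simp only [Int.natAbs_neg, Int.natAbs_natCast, this]
    ring_nf
    omega

lemma card_diamond (N : ℕ) : (diamond N).card = 2 * N ^ 2 + 2 * N + 1 := by
  have hfst : ∀ p ∈ diamond N, p.1 ∈ Icc (-(N : ℤ)) N := fun p hp =>
    (mem_product.1 (mem_filter.1 hp).1).1
  rw [card_eq_sum_card_fiberwise hfst,
    sum_congr rfl (fun a ha => card_diamond_fiber N a (by rw [mem_Icc] at ha; omega)),
    sum_Icc_two_mul_sub_natAbs_add_one]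

def OnLine (d p : ℤ × ℤ) : Prop := p.1 * d.2 = p.2 * d.1

instance (d : ℤ × ℤ) : DecidablePred (OnLine d) := fun _ => by unfold OnLine; infer_instance

lemma eq_zero_of_onLine_of_onLine {d d' p : ℤ × ℤ} (hdd' : d.1 * d'.2 ≠ d.2 * d'.1)
    (hd : OnLine d p) (hd' : OnLine d' p) : p = 0 := by
  unfold OnLine at hd hd'
  have h1 : p.1 * (d.1 * d'.2 - d.2 * d'.1) = 0 := by linear_combination d.1 * hd' - d'.1 * hd
  have h2 : p.2 * (d.1 * d'.2 - d.2 * d'.1) = 0 := by linear_combination d.2 * hd' - d'.2 * hd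
  have hdet : d.1 * d'.2 - d.2 * d'.1 ≠ 0 := sub_ne_zero.2 hdd'
  exact Prod.ext ((mul_eq_zero.1 h1).resolve_right hdet) ((mul_eq_zero.1 h2).resolve_right hdet)

lemma IsCoprime.exists_eq_smul_of_onLine {d p : ℤ × ℤ} (hd : IsCoprime d.1 d.2)
    (hp : OnLine d p) : ∃ w : ℤ, p = w • d := by
  obtain ⟨x, y, hxy⟩ := hd
  rw [OnLine] at hp
  refine ⟨x * p.1 + y * p.2, Prod.ext ?_ ?_⟩
  · simp only [Prod.smul_fst, smul_eq_mul]; linear_combination (-p.1) * hxy + y * hp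
  · simp only [Prod.smul_snd, smul_eq_mul]; linear_combination (-p.2) * hxy - x * hp

lemma smul_mem_diamond_iff {d : ℤ × ℤ} (hd : d ≠ 0) (N : ℕ) (w : ℤ) :
    w • d ∈ diamond N ↔ w.natAbs ≤ N / (d.1.natAbs + d.2.natAbs) := by
  have hpos : 0 < d.1.natAbs + d.2.natAbs := by
    obtain ⟨d₁, d₂⟩ := d
    simp only [ne_eq, Prod.mk_eq_zero, not_and_or] at hd
    omega
  rw [Nat.le_div_iff_mul_le hpos, mul_add]
  simp only [diamond, mem_filter, mem_product, mem_Icc, Prod.smul_fst, Prod.smul_snd, smul_eq_mul,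
    Int.natAbs_mul]
  have h1 := Int.natAbs_mul w d.1
  have h2 := Int.natAbs_mul w d.2
  generalize w * d.1 = u at *
  generalize w * d.2 = v at *
  omega

lemma card_filter_onLine_erase_zero {d : ℤ × ℤ} (hd : IsCoprime d.1 d.2) (N : ℕ) :
    (((diamond N).erase 0).filter (OnLine d)).card = 2 * (N / (d.1.natAbs + d.2.natAbs)) := by
  have hd0 : d ≠ 0 := fun h => not_isUnit_zero (M₀ := ℤ) (isCoprime_self.1 (by simpa [h] using hd))
  set k := N / (d.1.natAbs + d.2.natAbs)
  have : ((diamond N).erase 0).filter (OnLine d) = ((Icc (-(k : ℤ)) k).erase 0).image (· • d) := by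
    ext p
    simp only [mem_filter, mem_erase, mem_image]
    constructor
    · rintro ⟨⟨hp0, hp⟩, hpd⟩
      obtain ⟨w, rfl⟩ := hd.exists_eq_smul_of_onLine hpd
      refine ⟨w, ⟨fun hw => hp0 (by rw [hw, zero_smul]), ?_⟩, rfl⟩
      have := (smul_mem_diamond_iff hd0 N w).1 hp
      rw [mem_Icc]; omega
    · rintro ⟨w, ⟨hw0, hw⟩, rfl⟩
      rw [mem_Icc] at hw
      refine ⟨⟨smul_ne_zero hw0 hd0, (smul_mem_diamond_iff hd0 N w).2 (by omega)⟩, ?_⟩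
      simp only [OnLine, Prod.smul_fst, Prod.smul_snd, smul_eq_mul]; ring
  rw [this, card_image_of_injective _ (smul_left_injective ℤ hd0),
    card_erase_of_mem (by simp), Int.card_Icc]
  omega

/-- `(a, b)` lies on one of these lines iff two entries of `magicSquareOf c (a, b)` coincide. -/
def forbiddenDirections : Finset (ℤ × ℤ) :=
  {(1, 0), (0, 1), (1, 1), (1, -1), (2, 1), (2, -1), (1, 2), (1, -2)}

lemma forbiddenDirections_cross_ne : ∀ d ∈ forbiddenDirections, ∀ d' ∈ forbiddenDirections,
    d ≠ d' → d.1 * d'.2 ≠ d.2 * d'.1 := by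
  decide

lemma gcd_eq_one_of_mem_forbiddenDirections :
    ∀ d ∈ forbiddenDirections, Int.gcd d.1 d.2 = 1 := by
  decide

lemma sum_forbiddenDirections (N : ℕ) :
    ∑ d ∈ forbiddenDirections, 2 * (N / (d.1.natAbs + d.2.natAbs)) =
      4 * N + 4 * (N / 2) + 8 * (N / 3) := by
  simp [forbiddenDirections]
  omega

noncomputable def magicParams (N : ℕ) : Finset (ℤ × ℤ) :=
  ((diamond N).erase 0).filter fun p => ∀ d ∈ forbiddenDirections, ¬ OnLine d p

lemma card_magicParams (N : ℕ) :
    (magicParams N).card + 2 * N + 4 * (N / 2) + 8 * (N / 3) = 2 * N ^ 2 := by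
  have hon_lines : ((diamond N).erase 0).filter (fun p => ¬ ∀ d ∈ forbiddenDirections, ¬ OnLine d p)
      = forbiddenDirections.biUnion fun d => ((diamond N).erase 0).filter (OnLine d) := by
    ext p; simp only [mem_filter, mem_biUnion]; push Not; tauto
  have hdisj : (forbiddenDirections : Set (ℤ × ℤ)).PairwiseDisjoint
      fun d => ((diamond N).erase 0).filter (OnLine d) := by
    intro d hd d' hd' hdd'
    refine disjoint_left.2 fun p hp hp' => ?_
    rw [mem_filter, mem_erase] at hp hp'
    exact hp.1.1 <| eq_zero_of_onLine_of_onLine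
      (forbiddenDirections_cross_ne d hd d' hd' hdd') hp.2 hp'.2
  have hon_lines_card : (((diamond N).erase 0).filter
      (fun p => ¬ ∀ d ∈ forbiddenDirections, ¬ OnLine d p)).card =
        4 * N + 4 * (N / 2) + 8 * (N / 3) := by
    rw [hon_lines, card_biUnion hdisj, ← sum_forbiddenDirections N]
    exact sum_congr rfl fun d hd => card_filter_onLine_erase_zero
      (Int.isCoprime_iff_gcd_eq_one.2 (gcd_eq_one_of_mem_forbiddenDirections d hd)) N
  have := card_filter_add_card_filter_not (s := (diamond N).erase 0)
    (fun p => ∀ d ∈ forbiddenDirections, ¬ OnLine d p)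
  rw [hon_lines_card, card_erase_of_mem (by simp [diamond]), card_diamond] at this
  rw [magicParams]
  omega

lemma mem_magicParams {N : ℕ} {p : ℤ × ℤ} :
    p ∈ magicParams N ↔ p.1.natAbs + p.2.natAbs ≤ N ∧ p.1 ≠ 0 ∧ p.2 ≠ 0 ∧ p.1 ≠ p.2 ∧
      p.1 + p.2 ≠ 0 ∧ p.1 ≠ 2 * p.2 ∧ p.1 + 2 * p.2 ≠ 0 ∧ 2 * p.1 ≠ p.2 ∧ 2 * p.1 + p.2 ≠ 0 := by
  obtain ⟨a, b⟩ := p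
  simp only [magicParams, diamond, forbiddenDirections, OnLine, mem_filter, mem_erase,
    mem_product, mem_Icc, mem_insert, mem_singleton, forall_eq_or_imp, forall_eq, ne_eq,
    Prod.mk_eq_zero]
  omega

def magicSquareOf (c : ℕ) (p : ℤ × ℤ) : Matrix (Fin 3) (Fin 3) ℕ :=
  Matrix.map !![c + p.1, c - p.1 - p.2, c + p.2;
    c - p.1 + p.2, (c : ℤ), c + p.1 - p.2;
    c - p.2, c + p.1 + p.2, c - p.1] Int.toNat

lemma isMagicSquare3_magicSquareOf {N : ℕ} {p : ℤ × ℤ} (hp : p ∈ magicParams N) :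
    IsMagicSquare3 (3 * (N + 1)) (magicSquareOf (N + 1) p) := by
  rw [mem_magicParams] at hp
  refine ⟨?_, ?_, ?_, ?_, ?_, ?_⟩
  · intro i j
    fin_cases i <;> fin_cases j <;> simp [magicSquareOf] <;> omega
  · rintro ⟨i, j⟩ ⟨k, l⟩ h
    fin_cases i <;> fin_cases j <;> fin_cases k <;> fin_cases l <;>
      simp [magicSquareOf] at h ⊢ <;> omega
  · intro i; fin_cases i <;> simp [magicSquareOf, Fin.sum_univ_three] <;> omega
  · intro j; fin_cases j <;> simp [magicSquareOf, Fin.sum_univ_three] <;> omega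
  · simp [magicSquareOf]; omega
  · simp [magicSquareOf]; omega

lemma exists_magicParams_of_isMagicSquare3 {N : ℕ} {M : Matrix (Fin 3) (Fin 3) ℕ}
    (hM : IsMagicSquare3 (3 * (N + 1)) M) :
    ∃ p ∈ magicParams N, magicSquareOf (N + 1) p = M := by
  obtain ⟨hpos, hinj, hrow, hcol, hdiag, hanti⟩ := hM
  have hne : ∀ p q : Fin 3 × Fin 3, p ≠ q → M p.1 p.2 ≠ M q.1 q.2 := fun _ _ => hinj.ne
  have := hpos 0 1; have := hpos 1 0; have := hpos 1 2; have := hpos 2 1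
  have := hrow 0; have := hrow 1; have := hrow 2; have := hcol 0; have := hcol 1; have := hcol 2
  have := hne (0, 0) (1, 1) (by decide); have := hne (0, 2) (1, 1) (by decide)
  have := hne (0, 0) (0, 2) (by decide); have := hne (0, 1) (1, 1) (by decide)
  have := hne (1, 2) (0, 2) (by decide); have := hne (2, 1) (2, 0) (by decide)
  have := hne (1, 0) (0, 0) (by decide); have := hne (2, 1) (2, 2) (by decide)
  simp only [Fin.sum_univ_three] at *
  refine ⟨((M 0 0 : ℤ) - (N + 1), (M 0 2 : ℤ) - (N + 1)), mem_magicParams.2 (by omega), ?_⟩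
  ext i j
  fin_cases i <;> fin_cases j <;> simp [magicSquareOf] <;> omega

lemma injOn_magicSquareOf (N : ℕ) : Set.InjOn (magicSquareOf (N + 1)) (magicParams N) := by
  intro p hp q hq h
  rw [mem_coe, mem_magicParams] at hp hq
  have h00 := congrFun (congrFun h 0) 0
  have h02 := congrFun (congrFun h 0) 2
  simp only [magicSquareOf, Matrix.map_apply, Matrix.of_apply, Matrix.cons_val',
    Matrix.cons_val_zero, Matrix.cons_val_two, Matrix.empty_val', Matrix.cons_val_fin_one,
    Matrix.tail_cons, Matrix.head_cons] at h00 h02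
  exact Prod.ext (by omega) (by omega)

lemma a3_three_mul_succ (N : ℕ) : a3 (3 * (N + 1)) = (magicParams N).card := by
  have : {M | IsMagicSquare3 (3 * (N + 1)) M} = (magicParams N).image (magicSquareOf (N + 1)) := by
    ext M
    simp only [Set.mem_ofPred_eq, coe_image, Set.mem_image, mem_coe]
    exact ⟨exists_magicParams_of_isMagicSquare3,
      fun ⟨p, hp, hpM⟩ => hpM ▸ isMagicSquare3_magicSquareOf hp⟩
  rw [a3, this, Set.ncard_coe_finset, card_image_of_injOn (injOn_magicSquareOf N)]

theorem a3_formula_mod18_9_general (t : ℕ) (h : t % 18 = 9) :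
    (a3 t : ℚ) = (2 * (t : ℚ) ^ 2 - 32 * (t : ℚ) + 126) / 9 := by
  obtain ⟨m, rfl⟩ : ∃ m, t = 3 * ((6 * m + 2) + 1) := ⟨t / 18, by omega⟩
  have hcard : (magicParams (6 * m + 2)).card = 72 * m ^ 2 + 8 * m := by
    have := card_magicParams (6 * m + 2)
    rw [show (6 * m + 2) / 2 = 3 * m + 1 by omega, show (6 * m + 2) / 3 = 2 * m by omega] at this
    ring_nf at this ⊢
    omega
  rw [a3_three_mul_succ, hcard]
  push_cast
  ring

theorem a3_formula_mod18_9 (t : ℕ) (ht : 0 < t) (h : t % 18 = 9) :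
    (a3 t : ℚ) = (2 * (t : ℚ) ^ 2 - 32 * (t : ℚ) + 126) / 9 :=
  a3_formula_mod18_9_general t h
end
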